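/- Suppose a partition 𝒫 of agents V, monotone functions F_J : (Fin n → ℝ) → ℝ for each block J ∈ 𝒫, and utilities U_i : A_i → ℝ satisfy F_J(U(a)) = Σ_{i ∈ J} Q_i(a) for all joint actions a, where U(a) denotes the vector (U_1(a_1),...,U_n(a_n)). Then the QSM condition holds: max_a Σ_{i=1}^n Q_i(a) = Σ_{J ∈ 𝒫} max_a Σ_{i ∈ J} Q_i(a), where each A_i is finite and nonempty. -/
import Mathlib


theorem stmt_2 (n : ℕ) (A : Fin n → Type) [∀ i, Fintype (A i)] [∀ i, Nonempty (A i)]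
    (P : Finset (Finset (Fin n)))
    (hdisj : (P : Set (Finset (Fin n))).PairwiseDisjoint id)
    (hcov : ∀ i : Fin n, ∃ J ∈ P, i ∈ J)
    (Q : Fin n → (∀ i, A i) → ℝ)
    (U : ∀ i, A i → ℝ)
    (F : Finset (Fin n) → (Fin n → ℝ) → ℝ)
    (hmono : ∀ J ∈ P, Monotone (F J))
    (hdecomp : ∀ J ∈ P, ∀ a : ∀ i, A i, F J (fun i => U i (a i)) = ∑ i ∈ J, Q i a) :
    (⨆ a : ∀ i, A i, ∑ i : Fin n, Q i a) =
      ∑ J ∈ P, ⨆ a : ∀ i, A i, ∑ i ∈ J, Q i a := by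
  classical
  have hU : P.biUnion id = Finset.univ := by
    ext i
    simp only [Finset.mem_biUnion, Finset.mem_univ, iff_true, id]
    exact hcov i
  choose astar hastar using fun i => Finite.exists_max (U i)
  have hmax : ∀ a : ∀ i, A i, ∀ J ∈ P, ∑ i ∈ J, Q i a ≤ ∑ i ∈ J, Q i astar := by
    intro a J hJ
    rw [← hdecomp J hJ a, ← hdecomp J hJ astar]
    exact hmono J hJ (fun i => hastar i (a i))
  have hpart : ∀ a : ∀ i, A i, ∑ i : Fin n, Q i a = ∑ J ∈ P, ∑ i ∈ J, Q i a := by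
    intro a
    rw [← hU, Finset.sum_biUnion hdisj]; rfl
  have hsup : ∀ f : (∀ i, A i) → ℝ, (∀ a, f a ≤ f astar) → (⨆ a, f a) = f astar := by
    intro f hf
    exact le_antisymm (ciSup_le hf)
      (le_ciSup (Set.Finite.bddAbove (Set.finite_range f)) astar)
  rw [hsup _ (fun a => by
      rw [hpart a, hpart astar]
      exact Finset.sum_le_sum fun J hJ => hmax a J hJ), hpart astar]
  exact Finset.sum_congr rfl fun J hJ => (hsup _ (fun a => hmax a J hJ)).symm
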